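/- Let V be a finite-dimensional real inner product space, p and q positive integers, and J : V → V a linear map with J² = p·J + q·id that is self-adjoint: ⟨J x, y⟩ = ⟨x, J y⟩ for all x, y ∈ V. Let W ⊆ V be a subspace with orthogonal projection P, set T x = P(J x) and N x = (id − P)(J x), and let D ⊆ W be a subspace that is slant with angle θ, i.e. ‖T x‖² = cos²θ · ‖J x‖² for every x ∈ D. Then for all x, y ∈ D: ⟨N x, N y⟩ = sin²θ · ( p·⟨T x, y⟩ + q·⟨x, y⟩ ). -/

import Mathlib

/-!
Since `N x ⊥ W ∋ T y`, `⟪N x, N y⟫ = ⟪J x, J y⟫ - ⟪T x, T y⟫`. Polarizing the slant condition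
gives `⟪T x, T y⟫ = cos²θ ⟪J x, J y⟫`, and symmetry of `J` with `J² = pJ + q` gives
`⟪J x, J y⟫ = p ⟪J x, y⟫ + q ⟪x, y⟫`, where `⟪J x, y⟫ = ⟪T x, y⟫` because `y ∈ W`.
-/

open RealInnerProductSpace

theorem inner_map_eq_mul_inner_map_of_norm_sq_eq {E F G : Type*}
    [NormedAddCommGroup E] [InnerProductSpace ℝ E]
    [NormedAddCommGroup F] [InnerProductSpace ℝ F]
    [NormedAddCommGroup G] [InnerProductSpace ℝ G]
    {f : E →ₗ[ℝ] F} {g : E →ₗ[ℝ] G} {D : Submodule ℝ E} {c : ℝ}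
    (h : ∀ x ∈ D, ‖f x‖ ^ 2 = c * ‖g x‖ ^ 2) {x y : E} (hx : x ∈ D) (hy : y ∈ D) :
    ⟪f x, f y⟫ = c * ⟪g x, g y⟫ := by
  have hxy := h (x + y) (D.add_mem hx hy)
  rw [map_add, map_add, norm_add_sq_real, norm_add_sq_real, h x hx, h y hy] at hxy
  linear_combination hxy / 2

theorem Submodule.inner_sub_starProjection_sub_starProjection {𝕜 E : Type*} [RCLike 𝕜]
    [NormedAddCommGroup E] [InnerProductSpace 𝕜 E] (K : Submodule 𝕜 E)
    [K.HasOrthogonalProjection] (u v : E) :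
    inner 𝕜 (u - K.starProjection u) (v - K.starProjection v) =
      inner 𝕜 u v - inner 𝕜 (K.starProjection u) (K.starProjection v) := by
  have hu : inner 𝕜 (u - K.starProjection u) (K.starProjection v) = 0 :=
    K.starProjection_inner_eq_zero u _ (K.starProjection_apply_mem v)
  have hv : inner 𝕜 (K.starProjection u) (v - K.starProjection v) = 0 :=
    inner_eq_zero_symm.mp (K.starProjection_inner_eq_zero v _ (K.starProjection_apply_mem u))
  rw [inner_sub_left] at hu
  rw [inner_sub_right] at hv
  rw [inner_sub_left, inner_sub_right, inner_sub_right]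
  linear_combination -hu - hv

theorem LinearMap.IsSymmetric.inner_map_map_of_sq_eq {E : Type*} [NormedAddCommGroup E]
    [InnerProductSpace ℝ E] {J : E →ₗ[ℝ] E} (hJ : J.IsSymmetric) {a b : ℝ}
    (hJ2 : ∀ x, J (J x) = a • J x + b • x) (x y : E) :
    ⟪J x, J y⟫ = a * ⟪J x, y⟫ + b * ⟪x, y⟫ := by
  rw [hJ, hJ2, inner_add_right, real_inner_smul_right, real_inner_smul_right, ← hJ]

theorem slant_inner_N_general {V : Type*} [NormedAddCommGroup V] [InnerProductSpace ℝ V]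
    [FiniteDimensional ℝ V]
    (p q : ℕ) (J : V →ₗ[ℝ] V)
    (hJ2 : ∀ x : V, J (J x) = (p : ℝ) • J x + (q : ℝ) • x)
    (hsym : ∀ x y : V, ⟪J x, y⟫ = ⟪x, J y⟫)
    (W : Submodule ℝ V)
    (T : V → V) (hT : ∀ x : V, T x = (W.orthogonalProjection (J x) : V))
    (N : V → V) (hN : ∀ x : V, N x = J x - (W.orthogonalProjection (J x) : V))
    (D : Submodule ℝ V) (hD : D ≤ W) (θ : ℝ)
    (hslant : ∀ x ∈ D, ‖T x‖ ^ 2 = Real.cos θ ^ 2 * ‖J x‖ ^ 2) :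
    ∀ x ∈ D, ∀ y ∈ D,
      ⟪N x, N y⟫ = Real.sin θ ^ 2 * ((p : ℝ) * ⟪T x, y⟫ + (q : ℝ) * ⟪x, y⟫) := by
  intro x hx y hy
  have hT' : ∀ z, T z = W.starProjection (J z) := hT
  have hTT : ⟪T x, T y⟫ = Real.cos θ ^ 2 * ⟪J x, J y⟫ := by
    simp only [hT'] at hslant ⊢
    exact inner_map_eq_mul_inner_map_of_norm_sq_eq
      (f := (W.starProjection : V →ₗ[ℝ] V) ∘ₗ J) hslant hx hy
  have hJTy : ⟪J x, y⟫ = ⟪T x, y⟫ := by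
    rw [hT', W.inner_starProjection_left_eq_right, W.starProjection_eq_self_iff.mpr (hD hy)]
  calc ⟪N x, N y⟫ = ⟪J x, J y⟫ - ⟪T x, T y⟫ := by
        rw [hN, hN, hT', hT']
        exact W.inner_sub_starProjection_sub_starProjection (J x) (J y)
    _ = Real.sin θ ^ 2 * ⟪J x, J y⟫ := by rw [hTT, Real.sin_sq]; ring
    _ = _ := by rw [LinearMap.IsSymmetric.inner_map_map_of_sq_eq hsym hJ2, hJTy]

/-- For a slant subspace `D ⊆ W` with slant angle `θ`
(`‖T x‖² = cos²θ · ‖J x‖²` on `D`), the normal parts satisfy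
`⟪N x, N y⟫ = sin²θ · (p·⟪T x, y⟫ + q·⟪x, y⟫)` for all `x, y ∈ D`. -/
theorem slant_inner_N {V : Type*} [NormedAddCommGroup V] [InnerProductSpace ℝ V]
    [FiniteDimensional ℝ V]
    (p q : ℕ) (hp : 0 < p) (hq : 0 < q) (J : V →ₗ[ℝ] V)
    (hJ2 : ∀ x : V, J (J x) = (p : ℝ) • J x + (q : ℝ) • x)
    (hsym : ∀ x y : V, ⟪J x, y⟫ = ⟪x, J y⟫)
    (W : Submodule ℝ V)
    (T : V → V) (hT : ∀ x : V, T x = (W.orthogonalProjection (J x) : V))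
    (N : V → V) (hN : ∀ x : V, N x = J x - (W.orthogonalProjection (J x) : V))
    (D : Submodule ℝ V) (hD : D ≤ W) (θ : ℝ)
    (hslant : ∀ x ∈ D, ‖T x‖ ^ 2 = Real.cos θ ^ 2 * ‖J x‖ ^ 2) :
    ∀ x ∈ D, ∀ y ∈ D,
      ⟪N x, N y⟫ = Real.sin θ ^ 2 * ((p : ℝ) * ⟪T x, y⟫ + (q : ℝ) * ⟪x, y⟫) :=
  slant_inner_N_general p q J hJ2 hsym W T hT N hN D hD θ hslant
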